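/- arXiv:2002.00415 — 2 statements merged into one kernel-verified Lean document; each statement's English description precedes it below -/
import Mathlib

section
/- (Hingston's arithmetic lemma, abstract form) Let ℓ_1, …, ℓ_r > 0 be finitely many positive reals, let k > 0, and let 𝕂 ⊆ ℕ be k-dense in ℕ, meaning (n−k, n+k) ∩ 𝕂 ≠ ∅ for every n ∈ ℕ. Suppose that for every ε > 0 there exists m̄ such that for all m ∈ 𝕂 with m ≥ m̄ there exist i(m) ∈ {1,…,r} and μ(m) ∈ ℕ with m < μ(m)·ℓ_{i(m)} ≤ m + ε. Then a contradiction arises; i.e., no finite set {ℓ_1,…,ℓ_r} of positive reals admits such approximations for all small ε. -/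
set_option maxHeartbeats 1000000 in
/-- Gap lemma: for any `ℓ > 0` and `D`, there is `ε > 0` such that any two natural
multiples of `ℓ` lying within `ε` above (distinct) integers must differ by at least `D`. -/
lemma exists_eps (ℓ : ℝ) (hℓ : 0 < ℓ) (D : ℕ) (hD : 0 < D) :
    ∃ ε : ℝ, 0 < ε ∧ ε ≤ 1 ∧ ∀ μ μ' m m' : ℕ, μ < μ' → μ' < μ + D →
      (m : ℝ) < (μ : ℝ) * ℓ → (μ : ℝ) * ℓ ≤ (m : ℝ) + ε →
      (m' : ℝ) < (μ' : ℝ) * ℓ → (μ' : ℝ) * ℓ ≤ (m' : ℝ) + ε → False := by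
  classical
  have key : ∃ ε : ℝ, 0 < ε ∧ ε ≤ (D : ℝ)⁻¹ ∧ ∀ d ∈ Finset.Ico 1 D,
      (∃ z : ℤ, (d : ℝ) * ℓ = z) ∨ ε ≤ |(d : ℝ) * ℓ - round ((d : ℝ) * ℓ)| := by
    set g : ℕ → ℝ := fun d =>
      if ∃ z : ℤ, (d : ℝ) * ℓ = z then 1 else |(d : ℝ) * ℓ - round ((d : ℝ) * ℓ)| with hgdef
    have hg : ∀ d, 0 < g d := by
      intro d
      by_cases h : ∃ z : ℤ, (d : ℝ) * ℓ = z
      · simp [hgdef, h]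
      · simp only [hgdef, if_neg h]
        rw [abs_pos, sub_ne_zero]
        exact fun he => h ⟨round ((d : ℝ) * ℓ), he⟩
    set S : Finset ℝ := insert ((D : ℝ)⁻¹) ((Finset.Ico 1 D).image g) with hSdef
    have hSne : S.Nonempty := ⟨_, Finset.mem_insert_self _ _⟩
    refine ⟨S.min' hSne, ?_, ?_, ?_⟩
    · have : ∀ x ∈ S, 0 < x := by
        intro x hx
        rcases Finset.mem_insert.mp hx with h | h
        · subst h; positivity
        · obtain ⟨d, _, rfl⟩ := Finset.mem_image.mp h; exact hg d
      exact this _ (S.min'_mem hSne)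
    · exact S.min'_le _ (Finset.mem_insert_self _ _)
    · intro d hd
      by_cases h : ∃ z : ℤ, (d : ℝ) * ℓ = z
      · exact Or.inl h
      · refine Or.inr ?_
        have : g d = |(d : ℝ) * ℓ - round ((d : ℝ) * ℓ)| := by simp only [hgdef, if_neg h]
        rw [← this]
        exact S.min'_le _ (Finset.mem_insert.mpr (Or.inr (Finset.mem_image.mpr ⟨d, hd, rfl⟩)))
  obtain ⟨ε, hε0, hεinv, hεprop⟩ := key
  have hD1 : (1 : ℝ) ≤ D := by exact_mod_cast hD
  have hε1 : ε ≤ 1 := hεinv.trans (by rw [inv_le_one_iff₀]; right; exact hD1)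
  refine ⟨ε, hε0, hε1, ?_⟩
  intro μ μ' m m' hlt hsm h1 h2 h3 h4
  obtain ⟨d, hd1, hdD, hdcast⟩ : ∃ d : ℕ, 1 ≤ d ∧ d < D ∧ (d : ℝ) = (μ' : ℝ) - μ := by
    refine ⟨μ' - μ, by omega, by omega, ?_⟩
    have h : (μ : ℕ) ≤ μ' := hlt.le
    push_cast [Nat.cast_sub h]
    ring
  have hd0 : (0 : ℝ) < d := by exact_mod_cast hd1
  have hdDR : (d : ℝ) < D := by exact_mod_cast hdD
  rcases hεprop d (Finset.mem_Ico.mpr ⟨hd1, hdD⟩) with ⟨z, hz⟩ | hfar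
  · -- rational case: d * (μℓ - m) is a positive integer < 1
    have hwval : ((((μ : ℤ) * z - (d : ℤ) * m : ℤ)) : ℝ) = (d : ℝ) * ((μ : ℝ) * ℓ - m) := by
      have hμz : (μ : ℝ) * ((d : ℝ) * ℓ) = (μ : ℝ) * z := by rw [hz]
      push_cast
      nlinarith [hμz]
    set w : ℤ := (μ : ℤ) * z - (d : ℤ) * m with hwdef
    have hw0 : (0 : ℝ) < (w : ℝ) := by rw [hwval]; nlinarith [h1, h2]
    have hw1 : (w : ℝ) < 1 := by
      rw [hwval]
      have h5 : (μ : ℝ) * ℓ - m ≤ ε := by linarith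
      have h6 : (d : ℝ) * ((μ : ℝ) * ℓ - m) ≤ (d : ℝ) * ε := by nlinarith [h1]
      have h7 : (d : ℝ) * ε < (D : ℝ) * ε := by nlinarith
      have h8 : (D : ℝ) * ε ≤ 1 := by
        have hDD : (0 : ℝ) < D := by linarith
        calc (D : ℝ) * ε ≤ (D : ℝ) * (D : ℝ)⁻¹ := by nlinarith
          _ = 1 := mul_inv_cancel₀ (ne_of_gt hDD)
      linarith
    have hwge : (1 : ℤ) ≤ w := by exact_mod_cast hw0
    have : (1 : ℝ) ≤ (w : ℝ) := by exact_mod_cast hwge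
    linarith
  · -- irrational-ish case: d*ℓ is within ε of the integer m' - m, contradiction
    have hmin := round_le ((d : ℝ) * ℓ) ((m' : ℤ) - m)
    have habs : |(d : ℝ) * ℓ - (((m' : ℤ) - (m : ℤ) : ℤ) : ℝ)| < ε := by
      push_cast
      rw [show (d : ℝ) * ℓ - ((m' : ℝ) - m) = ((μ' : ℝ) * ℓ - m') - ((μ : ℝ) * ℓ - m) by
        rw [hdcast]; ring, abs_lt]
      constructor <;> nlinarith [h1, h2, h3, h4]
    have := hmin.trans_lt habs
    linarith [hfar.trans this.le]

set_option maxHeartbeats 1000000 in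
/-- **Hingston's arithmetic lemma, abstract form.** Let
`ℓ 0, …, ℓ (r-1) > 0` be finitely many positive reals, `k > 0`, and `𝕂 ⊆ ℕ` a
`k`-dense subset of `ℕ`.  If for every `ε > 0` there is `M` such that every
`m ∈ 𝕂` with `m ≥ M` admits `i` and `μ ∈ ℕ` with `m < μ·ℓᵢ ≤ m + ε`, then a
contradiction arises. -/
theorem stmt_9 (r : ℕ) (hr : 0 < r) (ℓ : Fin r → ℝ) (hℓ : ∀ i, 0 < ℓ i)
    (k : ℝ) (hk : 0 < k) (𝕂 : Set ℕ)
    (hdense : ∀ n : ℕ, ∃ m ∈ 𝕂, (n : ℝ) - k < m ∧ (m : ℝ) < n + k)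
    (happrox : ∀ ε : ℝ, 0 < ε → ∃ M : ℕ, ∀ m ∈ 𝕂, M ≤ m →
      ∃ (i : Fin r) (μ : ℕ), (m : ℝ) < (μ : ℝ) * ℓ i ∧ (μ : ℝ) * ℓ i ≤ (m : ℝ) + ε) :
    False := by
  classical
  haveI hne : Nonempty (Fin r) := ⟨⟨0, hr⟩⟩
  -- minimal length L
  obtain ⟨L, hL, hLle⟩ : ∃ L : ℝ, 0 < L ∧ ∀ i, L ≤ ℓ i :=
    ⟨Finset.univ.inf' Finset.univ_nonempty ℓ,
      (Finset.lt_inf'_iff _).mpr fun i _ => hℓ i,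
      fun i => Finset.inf'_le _ (Finset.mem_univ i)⟩
  -- integer density scale K
  obtain ⟨K, hK1, hkK⟩ : ∃ K : ℕ, 1 ≤ K ∧ k ≤ (K : ℝ) :=
    ⟨⌈k⌉₊, Nat.one_le_ceil_iff.mpr hk, Nat.le_ceil k⟩
  have hK0 : (1 : ℝ) ≤ (K : ℝ) := by exact_mod_cast hK1
  -- gap size D
  obtain ⟨D, hD0, h8⟩ : ∃ D : ℕ, 0 < D ∧ 8 * (K : ℝ) * r ≤ L * D := by
    refine ⟨⌈8 * (K : ℝ) * r / L⌉₊ + 1, Nat.succ_pos _, ?_⟩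
    have h := Nat.le_ceil (8 * (K : ℝ) * r / L)
    rw [div_le_iff₀ hL] at h
    have : ((⌈8 * (K : ℝ) * r / L⌉₊ : ℝ)) ≤ ((⌈8 * (K : ℝ) * r / L⌉₊ + 1 : ℕ) : ℝ) := by
      push_cast; linarith
    nlinarith [hL]
  have hDR : (1 : ℝ) ≤ (D : ℝ) := by exact_mod_cast hD0
  -- ε from the gap lemma, uniform in i
  choose εf hεf0 hεf1 hεfP using fun i => exists_eps (ℓ i) (hℓ i) D hD0
  obtain ⟨ε, hε0, hε1, hεle⟩ : ∃ ε : ℝ, 0 < ε ∧ ε ≤ 1 ∧ ∀ i, ε ≤ εf i :=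
    ⟨Finset.univ.inf' Finset.univ_nonempty εf,
      (Finset.lt_inf'_iff _).mpr fun i _ => hεf0 i,
      (Finset.inf'_le _ (Finset.mem_univ (Classical.arbitrary _))).trans (hεf1 _),
      fun i => Finset.inf'_le _ (Finset.mem_univ i)⟩
  obtain ⟨M, hM⟩ := happrox ε hε0
  have hLD : (0 : ℝ) < L * D := by positivity
  -- number of sample points J
  obtain ⟨J, hJ0, hJ1⟩ : ∃ J : ℕ, 0 < J ∧
      2 * ((r : ℝ) * ((M : ℝ) + 2 * K + 1) / (L * D) + 2 * r) ≤ (J : ℝ) - 1 := by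
    refine ⟨⌈2 * ((r : ℝ) * ((M : ℝ) + 2 * K + 1) / (L * D) + 2 * r)⌉₊ + 1, Nat.succ_pos _, ?_⟩
    have h := Nat.le_ceil (2 * ((r : ℝ) * ((M : ℝ) + 2 * K + 1) / (L * D) + 2 * r))
    push_cast
    linarith
  have hJR : (1 : ℝ) ≤ (J : ℝ) := by exact_mod_cast hJ0
  set N : ℕ := M + 2 * K * J with hNdef
  have hNval : (N : ℝ) = (M : ℝ) + 2 * K * J := by rw [hNdef]; push_cast; ring
  clear_value N
  -- the size bound B
  obtain ⟨B, hBlo, hBhi⟩ : ∃ B : ℕ, ((N : ℝ) + 1) ≤ (B : ℝ) * (L * D) ∧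
      (B : ℝ) * (L * D) < ((N : ℝ) + 1) + (L * D) := by
    refine ⟨⌈((N : ℝ) + 1) / (L * D)⌉₊, ?_, ?_⟩
    · have h := Nat.le_ceil (((N : ℝ) + 1) / (L * D))
      rw [div_le_iff₀ hLD] at h
      exact h
    · have h := Nat.ceil_lt_add_one (show (0:ℝ) ≤ ((N : ℝ) + 1) / (L * D) by positivity)
      have h2 := mul_lt_mul_of_pos_right h hLD
      rw [add_mul, div_mul_cancel₀ _ (ne_of_gt hLD)] at h2
      linarith
  -- sample points in 𝕂
  choose mf hmf hlo hhi using fun j : Fin J => hdense (M + K + 2 * K * (j : ℕ))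
  have hcastn : ∀ j : Fin J, ((M + K + 2 * K * (j : ℕ) : ℕ) : ℝ)
      = (M : ℝ) + K + 2 * K * (j : ℕ) := by intro j; push_cast; ring
  have hjnn : ∀ j : Fin J, (0 : ℝ) ≤ ((j : ℕ) : ℝ) := fun j => Nat.cast_nonneg _
  have hMle : ∀ j : Fin J, M ≤ mf j := by
    intro j
    have h := hlo j
    rw [hcastn j] at h
    have : (M : ℝ) < mf j := by
      nlinarith [hkK, hK0, hjnn j, mul_nonneg (by nlinarith [hK0] : (0:ℝ) ≤ 2 * (K:ℝ)) (hjnn j)]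
    exact_mod_cast this.le
  have hmono : ∀ j j' : Fin J, j < j' → mf j < mf j' := by
    intro j j' h
    have h1 := hhi j
    have h2 := hlo j'
    rw [hcastn j] at h1
    rw [hcastn j'] at h2
    have hjj : ((j : ℕ) : ℝ) + 1 ≤ ((j' : ℕ) : ℝ) := by exact_mod_cast h
    have hprod : 2 * (K : ℝ) * (((j : ℕ) : ℝ) + 1) ≤ 2 * (K : ℝ) * ((j' : ℕ) : ℝ) := by
      nlinarith [hK0]
    have : (mf j : ℝ) < mf j' := by nlinarith [hkK, hK0]
    exact_mod_cast this
  choose ix μf hμ1 hμ2 using fun j : Fin J => hM (mf j) (hmf j) (hMle j)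
  have hNbd : ∀ j : Fin J, (mf j : ℝ) + ε ≤ (N : ℝ) + 1 := by
    intro j
    have h1 := hhi j
    rw [hcastn j] at h1
    have hj : ((j : ℕ) : ℝ) + 1 ≤ (J : ℝ) := by exact_mod_cast j.2
    have hprod : 2 * (K : ℝ) * (((j : ℕ) : ℝ) + 1) ≤ 2 * (K : ℝ) * (J : ℝ) := by
      nlinarith [hK0]
    have : (mf j : ℝ) < (N : ℝ) := by rw [hNval]; nlinarith [hkK, hK0]
    linarith
  have hμB : ∀ j : Fin J, μf j / D ≤ B := by
    intro j
    have h1 : (μf j : ℝ) * L ≤ (N : ℝ) + 1 := by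
      have ha := (hμ2 j).trans (hNbd j)
      have hb := hLle (ix j)
      have hc : (0 : ℝ) ≤ (μf j : ℝ) := Nat.cast_nonneg _
      nlinarith
    have h3 : (μf j : ℝ) ≤ (B : ℝ) * D := by nlinarith [hBlo, hL]
    have h4 : μf j ≤ B * D := by exact_mod_cast h3
    calc μf j / D ≤ B * D / D := Nat.div_le_div_right h4
      _ = B := Nat.mul_div_cancel B hD0
  have hinj : Function.Injective
      (fun j : Fin J => ((ix j, ⟨μf j / D, Nat.lt_succ_of_le (hμB j)⟩) : Fin r × Fin (B + 1))) := by
    have key : ∀ j j' : Fin J, j < j' → ix j = ix j' → μf j / D = μf j' / D → False := by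
      intro j j' hjj hix hdiv
      have hmm : mf j < mf j' := hmono j j' hjj
      have hmm' : (mf j : ℝ) + 1 ≤ (mf j' : ℝ) := by exact_mod_cast hmm
      have hμlt : μf j < μf j' := by
        have hc : (μf j : ℝ) * ℓ (ix j') < (μf j' : ℝ) * ℓ (ix j') := by
          rw [← hix]
          calc (μf j : ℝ) * ℓ (ix j) ≤ (mf j : ℝ) + ε := hμ2 j
            _ ≤ (mf j' : ℝ) := by linarith
            _ < (μf j' : ℝ) * ℓ (ix j) := by rw [hix]; exact hμ1 j'
        have := lt_of_mul_lt_mul_right hc (hℓ (ix j')).le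
        exact_mod_cast this
      have hgap : μf j + D ≤ μf j' := by
        by_contra hcon
        push_neg at hcon
        refine hεfP (ix j') (μf j) (μf j') (mf j) (mf j') hμlt hcon ?_ ?_ ?_ ?_
        · rw [← hix]; exact hμ1 j
        · rw [← hix]; exact (hμ2 j).trans (by linarith [hεle (ix j)])
        · exact hμ1 j'
        · exact (hμ2 j').trans (by linarith [hεle (ix j')])
      have : μf j / D + 1 ≤ μf j' / D := by
        have hd1 : (μf j + D) / D ≤ μf j' / D := Nat.div_le_div_right hgap
        rwa [Nat.add_div_right _ hD0] at hd1
      omega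
    intro j j' heq
    simp only [Prod.mk.injEq, Fin.mk.injEq] at heq
    rcases lt_trichotomy j j' with h | h | h
    · exact absurd (key j j' h heq.1 heq.2) (fun x => x)
    · exact h
    · exact absurd (key j' j h heq.1.symm heq.2.symm) (fun x => x)
  have hcard : J ≤ r * (B + 1) := by
    have h := Fintype.card_le_of_injective _ hinj
    simpa using h
  -- final numeric contradiction
  have hJmul : (r : ℝ) * ((M : ℝ) + 2 * K + 1) + 2 * r * (L * D) ≤ ((J : ℝ) - 1) * (L * D) / 2 := by
    have hX : (r : ℝ) * ((M : ℝ) + 2 * K + 1) / (L * D) ≤ ((J : ℝ) - 1) / 2 - 2 * r := by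
      linarith
    rw [div_le_iff₀ hLD] at hX
    nlinarith [hX]
  have hr' : (1 : ℝ) ≤ (r : ℝ) := by exact_mod_cast hr
  have hJRnn : (0 : ℝ) ≤ (J : ℝ) := by linarith
  have hfinal : (r : ℝ) * ((B : ℝ) + 1) < (J : ℝ) := by
    have e1 : (r : ℝ) * ((B : ℝ) * (L * D)) < (r : ℝ) * (((N : ℝ) + 1) + (L * D)) := by
      nlinarith [hBhi, hr']
    have e2 : 8 * (K : ℝ) * (r : ℝ) * (J : ℝ) ≤ (L * D) * (J : ℝ) := by
      nlinarith [h8, hJRnn]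
    have e3 : (r : ℝ) * ((B : ℝ) + 1) * (L * D) < (J : ℝ) * (L * D) := by
      nlinarith [e1, e2, hJmul, hLD, hr', hNval]
    nlinarith [e3, hLD]
  have hcard' : (J : ℝ) ≤ (r : ℝ) * ((B : ℝ) + 1) := by exact_mod_cast hcard
  linarith
end

section
/- Let f : ℝ → ℝ be continuous with f(t₀) = 0, f'(t) ≠ 0 at every zero of f (f is C¹ near its zeros), and f not identically zero. Suppose g : ℝ → ℝ is another such function whose zeros are all simple, and that f and g have no common zero. If f and g are solutions of the same second-order linear scalar ODE u'' + p(t)u' + q(t)u = 0 with continuous coefficients, then between any two consecutive zeros of f there lies exactly one zero of g (Sturm separation theorem). -/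
/-!
The Wronskian `W = f g' - f' g` of two solutions of `u'' + p u' + q u = 0` satisfies
`W' = -p W`, so `W e^{∫ p}` is constant; since `W = -f' g ≠ 0` at a zero of `f`, `W` vanishes
nowhere. If `u` vanishes at `a < b` and `v` has no zero on `[a, b]`, Rolle's theorem applied to
`u / v`, whose derivative is `-W(u, v) / v²`, produces a zero of the Wronskian. Taking `u = f`
gives a zero of `g` between consecutive zeros of `f`; taking `u = g` rules out a second one.
-/

open Set

noncomputable def wronskian (f g : ℝ → ℝ) (t : ℝ) : ℝ :=
  f t * deriv g t - deriv f t * g t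

lemma wronskian_swap (f g : ℝ → ℝ) (t : ℝ) : wronskian g f t = -wronskian f g t := by
  unfold wronskian; ring

lemma hasDerivAt_wronskian {p q f g : ℝ → ℝ} {t : ℝ}
    (hf : DifferentiableAt ℝ f t) (hg : DifferentiableAt ℝ g t)
    (hf' : DifferentiableAt ℝ (deriv f) t) (hg' : DifferentiableAt ℝ (deriv g) t)
    (hfode : deriv (deriv f) t + p t * deriv f t + q t * f t = 0)
    (hgode : deriv (deriv g) t + p t * deriv g t + q t * g t = 0) :
    HasDerivAt (wronskian f g) (-p t * wronskian f g t) t := by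
  refine ((hf.hasDerivAt.mul hg'.hasDerivAt).sub (hf'.hasDerivAt.mul hg.hasDerivAt)).congr_deriv ?_
  rw [show deriv (deriv f) t = -(p t * deriv f t) - q t * f t by linarith,
    show deriv (deriv g) t = -(p t * deriv g t) - q t * g t by linarith]
  unfold wronskian
  ring

lemma eq_zero_of_hasDerivAt_eq_mul {a y : ℝ → ℝ} (ha : Continuous a)
    (hy : ∀ t, HasDerivAt y (a t * y t) t) {t₀ : ℝ} (h₀ : y t₀ = 0) (t : ℝ) : y t = 0 := by
  set A : ℝ → ℝ := fun t => ∫ s in (0 : ℝ)..t, a s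
  have hA (t : ℝ) : HasDerivAt A (a t) t :=
    intervalIntegral.integral_hasDerivAt_right (ha.intervalIntegrable 0 t)
      (ha.stronglyMeasurableAtFilter _ _) ha.continuousAt
  have hconst : ∀ x z, y x * Real.exp (-A x) = y z * Real.exp (-A z) := by
    refine is_const_of_deriv_eq_zero (f := fun t => y t * Real.exp (-A t)) ?_ fun t => ?_
    · exact fun t => ((hy t).mul (hA t).neg.exp).differentiableAt
    · exact ((hy t).mul (hA t).neg.exp).deriv.trans (by ring)
  simpa [h₀] using hconst t t₀

lemma wronskian_ne_zero {p q f g : ℝ → ℝ} (hp : Continuous p)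
    (hf : ContDiff ℝ 2 f) (hg : ContDiff ℝ 2 g)
    (hfode : ∀ t, deriv (deriv f) t + p t * deriv f t + q t * f t = 0)
    (hgode : ∀ t, deriv (deriv g) t + p t * deriv g t + q t * g t = 0)
    {t₀ : ℝ} (h₀ : wronskian f g t₀ ≠ 0) (t : ℝ) : wronskian f g t ≠ 0 := fun h =>
  h₀ <| eq_zero_of_hasDerivAt_eq_mul hp.neg
    (fun s => hasDerivAt_wronskian (hf.differentiable two_ne_zero s)
      (hg.differentiable two_ne_zero s) (hf.differentiable_deriv_two s)
      (hg.differentiable_deriv_two s) (hfode s) (hgode s)) h t₀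

lemma exists_wronskian_eq_zero {u v : ℝ → ℝ} (hu : Differentiable ℝ u) (hv : Differentiable ℝ v)
    {a b : ℝ} (hab : a < b) (hua : u a = 0) (hub : u b = 0) (hv0 : ∀ t ∈ Icc a b, v t ≠ 0) :
    ∃ c ∈ Ioo a b, wronskian u v c = 0 := by
  have hcont : ContinuousOn (fun t => u t / v t) (Icc a b) :=
    hu.continuous.continuousOn.div hv.continuous.continuousOn hv0
  obtain ⟨c, hc, hc0⟩ := exists_hasDerivAt_eq_zero hab hcont (by simp [hua, hub])
    fun t ht => (hu t).hasDerivAt.div (hv t).hasDerivAt (hv0 t (Ioo_subset_Icc_self ht))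
  refine ⟨c, hc, ?_⟩
  have hvc := hv0 c (Ioo_subset_Icc_self hc)
  rw [div_eq_zero_iff, or_iff_left (pow_ne_zero 2 hvc)] at hc0
  unfold wronskian
  linarith

theorem stmt_14_general (p q f g : ℝ → ℝ)
    (hp : Continuous p)
    (hf : ContDiff ℝ 2 f) (hg : ContDiff ℝ 2 g)
    (hfode : ∀ t, deriv (deriv f) t + p t * deriv f t + q t * f t = 0)
    (hgode : ∀ t, deriv (deriv g) t + p t * deriv g t + q t * g t = 0)
    (hfsimple : ∀ t, f t = 0 → deriv f t ≠ 0)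
    (hnocommon : ∀ t, ¬(f t = 0 ∧ g t = 0)) :
    ∀ t₁ t₂ : ℝ, t₁ < t₂ → f t₁ = 0 → f t₂ = 0 →
      (∀ t ∈ Set.Ioo t₁ t₂, f t ≠ 0) →
      ∃! t, t ∈ Set.Ioo t₁ t₂ ∧ g t = 0 := by
  intro t₁ t₂ hlt hft₁ hft₂ hfnz
  have hfd := hf.differentiable two_ne_zero
  have hgd := hg.differentiable two_ne_zero
  have hgt₁ : g t₁ ≠ 0 := fun h => hnocommon t₁ ⟨hft₁, h⟩
  have hgt₂ : g t₂ ≠ 0 := fun h => hnocommon t₂ ⟨hft₂, h⟩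
  have hW := wronskian_ne_zero hp hf hg hfode hgode (t₀ := t₁) <| by
    simpa [wronskian, hft₁] using mul_ne_zero (hfsimple t₁ hft₁) hgt₁
  obtain ⟨s, hs, hgs⟩ : ∃ s ∈ Ioo t₁ t₂, g s = 0 := by
    by_contra! hg0
    have hg0' : ∀ t ∈ Icc t₁ t₂, g t ≠ 0 := by
      intro t ht
      rcases ht.1.eq_or_lt with rfl | h₁; · exact hgt₁
      rcases ht.2.eq_or_lt with rfl | h₂; · exact hgt₂
      exact hg0 t ⟨h₁, h₂⟩
    obtain ⟨c, -, hc⟩ := exists_wronskian_eq_zero hfd hgd hlt hft₁ hft₂ hg0'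
    exact hW c hc
  have hlt_false : ∀ a ∈ Ioo t₁ t₂, ∀ b ∈ Ioo t₁ t₂, g a = 0 → g b = 0 → ¬a < b := by
    intro a ha b hb hga hgb hab
    obtain ⟨c, -, hc⟩ := exists_wronskian_eq_zero hgd hfd hab hga hgb
      fun t ht => hfnz t ⟨ha.1.trans_le ht.1, ht.2.trans_lt hb.2⟩
    rw [wronskian_swap, neg_eq_zero] at hc
    exact hW c hc
  refine ⟨s, ⟨hs, hgs⟩, fun r ⟨hr, hgr⟩ => ?_⟩
  by_contra hne
  rcases lt_or_gt_of_ne hne with h | h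
  · exact hlt_false r hr s hs hgr hgs h
  · exact hlt_false s hs r hr hgs hgr h

/-- **Sturm separation theorem.** Let `f, g` be nontrivial solutions
of the same second-order linear scalar ODE `u'' + p u' + q u = 0` with continuous
coefficients, with only simple zeros and no common zero.  Then between any two
consecutive zeros of `f` there lies exactly one zero of `g`. -/
theorem stmt_14 (p q f g : ℝ → ℝ)
    (hp : Continuous p) (hq : Continuous q)
    (hf : ContDiff ℝ 2 f) (hg : ContDiff ℝ 2 g)
    (hfode : ∀ t, deriv (deriv f) t + p t * deriv f t + q t * f t = 0)
    (hgode : ∀ t, deriv (deriv g) t + p t * deriv g t + q t * g t = 0)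
    (hfne : ∃ t, f t ≠ 0) (hgne : ∃ t, g t ≠ 0)
    (hfzero : ∃ t₀, f t₀ = 0)
    (hfsimple : ∀ t, f t = 0 → deriv f t ≠ 0)
    (hgsimple : ∀ t, g t = 0 → deriv g t ≠ 0)
    (hnocommon : ∀ t, ¬(f t = 0 ∧ g t = 0)) :
    ∀ t₁ t₂ : ℝ, t₁ < t₂ → f t₁ = 0 → f t₂ = 0 →
      (∀ t ∈ Set.Ioo t₁ t₂, f t ≠ 0) →
      ∃! t, t ∈ Set.Ioo t₁ t₂ ∧ g t = 0 :=
  stmt_14_general p q f g hp hf hg hfode hgode hfsimple hnocommon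
end
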